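/- Let X be a Banach space and T : X → X a bounded linear operator with ‖T − T²‖ ≤ θ < 1/4. Let S = Σ_{m=0}^∞ binom(2m,m)(T − T²)^m and P = (1/2)(I − (I − 2T)S). Then P is a projection, i.e., P² = P. -/

import Mathlib

/-!
With `A = T - T²`, the series `S = ∑ C(2m,m) Aᵐ` is the binomial series of `(1 - 4A)^(-1/2)`:
the Cauchy product of `S` with itself has coefficients `∑_{i+j=n} C(2i,i) C(2j,j) = 4ⁿ`, so
`S² = ∑ (4A)ⁿ = (1 - 4A)⁻¹`. Since `(1 - 2T)² = 1 - 4A` and `1 - 2T` commutes with `S`, the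
operator `U = (1 - 2T) S` satisfies `U² = 1`, and `P = (1 - U) / 2` is then idempotent.
-/

open Finset

namespace Nat

theorem two_mul_sum_antidiagonal_fst_mul_centralBinom_mul (n : ℕ) :
    2 * ∑ p ∈ antidiagonal n, p.1 * (centralBinom p.1 * centralBinom p.2) =
      n * ∑ p ∈ antidiagonal n, centralBinom p.1 * centralBinom p.2 := by
  rw [two_mul]
  nth_rw 2 [← Finset.Nat.sum_antidiagonal_swap]
  rw [← sum_add_distrib, mul_sum]
  refine sum_congr rfl fun p hp => ?_
  rw [HasAntidiagonal.mem_antidiagonal] at hp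
  simp only [Prod.fst_swap, Prod.snd_swap, ← hp]
  ring

theorem sum_antidiagonal_succ_fst_mul_centralBinom_mul (n : ℕ) :
    ∑ p ∈ antidiagonal (n + 1), p.1 * (centralBinom p.1 * centralBinom p.2) =
      ∑ p ∈ antidiagonal n, (4 * p.1 + 2) * (centralBinom p.1 * centralBinom p.2) := by
  rw [Finset.Nat.sum_antidiagonal_succ, zero_mul, zero_add]
  refine sum_congr rfl fun p _ => ?_
  rw [← mul_assoc, succ_mul_centralBinom_succ]
  ring

/-- The weighted sum `W n = ∑_{i+j=n} i C(2i,i) C(2j,j)` satisfies both `2 W n = n a n` (symmetry)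
and `W (n+1) = 4 W n + 2 a n` (the recurrence of `C(2i,i)`), which together give
`a (n+1) = 4 a n` for `a n = ∑_{i+j=n} C(2i,i) C(2j,j)`. -/
theorem sum_antidiagonal_centralBinom_mul_centralBinom (n : ℕ) :
    ∑ p ∈ antidiagonal n, centralBinom p.1 * centralBinom p.2 = 4 ^ n := by
  induction n with
  | zero => simp
  | succ n ih =>
    have hW := two_mul_sum_antidiagonal_fst_mul_centralBinom_mul n
    rw [ih] at hW
    apply Nat.eq_of_mul_eq_mul_left (by positivity : 0 < n + 1)
    rw [← two_mul_sum_antidiagonal_fst_mul_centralBinom_mul,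
      sum_antidiagonal_succ_fst_mul_centralBinom_mul]
    simp only [add_mul, sum_add_distrib, mul_assoc, ← mul_sum, ih]
    linear_combination (norm := ring_nf) 4 * hW

end Nat

section CentralBinomSeries

variable {R : Type*} [NormedRing R] [NormedAlgebra ℝ R]

theorem summable_norm_centralBinom_smul_pow {a : R} (ha : ‖a‖ < 1 / 4) :
    Summable fun m => ‖(Nat.centralBinom m : ℝ) • a ^ m‖ := by
  have h4a : 4 * ‖a‖ < 1 := by linarith
  refine (summable_geometric_of_lt_one (by positivity) h4a).of_norm_bounded_eventually_nat ?_
  filter_upwards [eventually_norm_pow_le a] with m hm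
  calc ‖‖(Nat.centralBinom m : ℝ) • a ^ m‖‖ = Nat.centralBinom m * ‖a ^ m‖ := by
        rw [norm_norm, norm_smul, Real.norm_natCast]
    _ ≤ 4 ^ m * ‖a‖ ^ m := by
        gcongr
        exact_mod_cast Nat.centralBinom_le_four_pow m
    _ = (4 * ‖a‖) ^ m := (mul_pow _ _ _).symm

theorem sum_antidiagonal_centralBinom_smul_pow_mul (a : R) (n : ℕ) :
    ∑ p ∈ antidiagonal n,
        ((Nat.centralBinom p.1 : ℝ) • a ^ p.1) * ((Nat.centralBinom p.2 : ℝ) • a ^ p.2) =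
      (4 • a) ^ n := by
  have hterm : ∀ p ∈ antidiagonal n,
      ((Nat.centralBinom p.1 : ℝ) • a ^ p.1) * ((Nat.centralBinom p.2 : ℝ) • a ^ p.2) =
        (Nat.centralBinom p.1 * Nat.centralBinom p.2) • a ^ n := by
    intro p hp
    rw [HasAntidiagonal.mem_antidiagonal] at hp
    rw [smul_mul_smul_comm, ← pow_add, hp, ← Nat.cast_mul, Nat.cast_smul_eq_nsmul]
  rw [Finset.sum_congr rfl hterm, ← Finset.sum_smul,
    Nat.sum_antidiagonal_centralBinom_mul_centralBinom, smul_pow]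

theorem Commute.of_hasSum_centralBinom {a b s : R} (hab : Commute b a)
    (hs : HasSum (fun m => (Nat.centralBinom m : ℝ) • a ^ m) s) : Commute b s :=
  hs.tsum_eq ▸ Commute.tsum_right b fun m => (hab.pow_right m).smul_right _

variable [CompleteSpace R]

theorem one_sub_four_smul_mul_self_of_hasSum_centralBinom {a s : R} (ha : ‖a‖ < 1 / 4)
    (hs : HasSum (fun m => (Nat.centralBinom m : ℝ) • a ^ m) s) :
    (1 - 4 • a) * (s * s) = 1 := by
  have hsum := summable_norm_centralBinom_smul_pow ha
  have h4a : ‖4 • a‖ < 1 := by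
    calc ‖4 • a‖ ≤ 4 * ‖a‖ := norm_nsmul_le
      _ < 1 := by linarith
  rw [← hs.tsum_eq, tsum_mul_tsum_eq_tsum_sum_antidiagonal_of_summable_norm hsum hsum]
  simp only [sum_antidiagonal_centralBinom_smul_pow_mul]
  exact mul_neg_geom_series _ h4a

end CentralBinomSeries

theorem isIdempotentElem_half_smul_one_sub {K R : Type*} [Field K] [NeZero (2 : K)] [Ring R]
    [Algebra K R] {u : R} (hu : u * u = 1) : IsIdempotentElem ((1 / 2 : K) • (1 - u)) := by
  have h : (1 - u) * (1 - u) = (2 : K) • (1 - u) := by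
    rw [mul_sub, sub_mul, sub_mul, hu, two_smul]
    simp only [one_mul, mul_one]
    abel
  rw [IsIdempotentElem, smul_mul_smul_comm, h, smul_smul]
  congr 1
  field_simp

theorem one_sub_two_nsmul_mul_self {R : Type*} [Ring R] (t : R) :
    (1 - 2 • t) * (1 - 2 • t) = 1 - 4 • (t - t ^ 2) := by
  noncomm_ring

theorem commute_one_sub_two_nsmul_sub_sq {R : Type*} [Ring R] (t : R) :
    Commute (1 - 2 • t) (t - t ^ 2) :=
  (Commute.one_left _).sub_left
    (((Commute.refl t).sub_right ((Commute.refl t).pow_right 2)).smul_left 2)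

/-- `P = (1/2)(I - (I - 2T)S)` is a projection. -/
theorem stmt_7 {X : Type*} [NormedAddCommGroup X] [NormedSpace ℝ X] [CompleteSpace X]
    (T : X →L[ℝ] X) (θ : ℝ) (hθ : θ < 1 / 4) (hT : ‖T - T ^ 2‖ ≤ θ)
    (S : X →L[ℝ] X)
    (hS : HasSum (fun m : ℕ => (Nat.centralBinom m : ℝ) • (T - T ^ 2) ^ m) S) :
    ((1 / 2 : ℝ) • ((1 : X →L[ℝ] X) - ((1 : X →L[ℝ] X) - 2 • T) * S)) ^ 2 =
      (1 / 2 : ℝ) • ((1 : X →L[ℝ] X) - ((1 : X →L[ℝ] X) - 2 • T) * S) := by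
  have hS_sq := one_sub_four_smul_mul_self_of_hasSum_centralBinom (hT.trans_lt hθ) hS
  have hcomm : Commute (1 - 2 • T) S :=
    (commute_one_sub_two_nsmul_sub_sq T).of_hasSum_centralBinom hS
  have hinv : ((1 - 2 • T) * S) * ((1 - 2 • T) * S) = 1 := by
    rw [hcomm.symm.mul_mul_mul_comm, one_sub_two_nsmul_mul_self, hS_sq]
  exact (sq _).trans (isIdempotentElem_half_smul_one_sub hinv)
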